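/- For a spin (j+1/2) Killing spinor φ with Killing number μ on a 3-manifold, the curvature action q(R) = (scal/8)(2j+3)(2j+1) + (1/4)Σᵢ π_j(eᵢ)π_j(Ric(eᵢ)) satisfies q(R)φ = μ²(2j+3)(2j+1)φ. Since q(R) is a symmetric endomorphism, μ² is real, hence μ is either real or purely imaginary. -/

import Mathlib

/-!
Contracting the integrability condition with `π_j(eₖ)` and summing over `k` turns the Ricci term
of `q(R)` into `(scal/2 - 4μ²)` times the Casimir, so `φ` is an eigenvector of `q(R)` with
eigenvalue `μ²(2j+1)(2j+3)`. Since the `π_j(eᵢ)` are skew-adjoint and `Ric` is symmetric, the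
Ricci term `Σᵢ π_j(eᵢ)π_j(Ric eᵢ)` is self-adjoint, so its eigenvalue `-(scal/2 - 4μ²)(2j+1)(2j+3)`
is real, whence `μ²` is real.
-/

open scoped ComplexConjugate

namespace LinearMap

theorem sum_comp_sum_smul_apply_eq_smul_sum {R M ι : Type*} [CommSemiring R] [AddCommMonoid M]
    [Module R M] [Fintype ι] (A : ι → M →ₗ[R] M) (a : ι → ι → R) (c : R) (x : M)
    (h : ∀ k, (∑ i, a k i • A i) x = c • A k x) :
    (∑ i, A i ∘ₗ ∑ m, a i m • A m) x = c • ∑ i, A i (A i x) := by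
  simp only [sum_apply, comp_apply, h, map_smul, Finset.smul_sum]

theorem isSymmetric_sum_comp_sum_smul {𝕜 E ι : Type*} [RCLike 𝕜] [NormedAddCommGroup E]
    [InnerProductSpace 𝕜 E] [FiniteDimensional 𝕜 E] [Fintype ι] (A : ι → E →ₗ[𝕜] E)
    (hA : ∀ i, (A i).adjoint = -A i) (a : ι → ι → ℝ) (ha : ∀ i m, a i m = a m i) :
    (∑ i, A i ∘ₗ ∑ m, (a i m : 𝕜) • A m).IsSymmetric := by
  rw [isSymmetric_iff_isSelfAdjoint, isSelfAdjoint_iff']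
  calc (∑ i, A i ∘ₗ ∑ m, (a i m : 𝕜) • A m).adjoint
      = ∑ i, ∑ m, (a i m : 𝕜) • (A m ∘ₗ A i) := by
        ext x
        simp only [map_sum, adjoint_comp, map_smulₛₗ, hA, RCLike.conj_ofReal, sum_apply,
          comp_apply, smul_apply, neg_apply, map_neg, smul_neg,
          Finset.sum_neg_distrib, neg_neg]
    _ = ∑ i, A i ∘ₗ ∑ m, (a i m : 𝕜) • A m := by
        rw [Finset.sum_comm]
        ext x
        simp only [sum_apply, comp_apply, smul_apply, map_sum, map_smul, ha]

end LinearMap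

theorem Complex.re_eq_zero_or_im_eq_zero_of_im_sq_eq_zero {z : ℂ} (h : (z ^ 2).im = 0) :
    z.re = 0 ∨ z.im = 0 := by
  have h' : 2 * z.re * z.im = 0 := by
    rw [sq, Complex.mul_im] at h
    linarith
  simpa using h'

theorem curvature_action_on_killing_spinor (j : ℕ) (W : Type*) [NormedAddCommGroup W]
    [InnerProductSpace ℂ W] [FiniteDimensional ℂ W]
    (A : Fin 3 → W →ₗ[ℂ] W)
    (hskew : ∀ i, LinearMap.adjoint (A i) = -A i)
    (hcas : A 0 ∘ₗ A 0 + A 1 ∘ₗ A 1 + A 2 ∘ₗ A 2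
      = (-((2 * (j : ℂ) + 1) * (2 * (j : ℂ) + 3))) • LinearMap.id)
    (μ : ℂ) (scal : ℝ) (Ric : Fin 3 → Fin 3 → ℝ)
    (hRicSymm : ∀ k l, Ric k l = Ric l k)
    (φ : W) (hφ : φ ≠ 0)
    (hint : ∀ k, ((∑ i, ((Ric k i : ℝ) : ℂ) • A i)
      - ((1 / 2 : ℂ) * (((scal : ℂ)) - 8 * μ ^ 2)) • A k) φ = 0)
    (qR : W →ₗ[ℂ] W)
    (hqR : qR = (((scal : ℂ) / 8) * ((2 * (j : ℂ) + 3) * (2 * (j : ℂ) + 1))) • LinearMap.id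
      + (1 / 4 : ℂ) • ∑ i, A i ∘ₗ (∑ m, ((Ric i m : ℝ) : ℂ) • A m)) :
    qR φ = (μ ^ 2 * ((2 * (j : ℂ) + 3) * (2 * (j : ℂ) + 1))) • φ ∧
    (μ ^ 2).im = 0 ∧ (μ.re = 0 ∨ μ.im = 0) := by
  set K : ℂ := (2 * (j : ℂ) + 1) * (2 * (j : ℂ) + 3)
  set c : ℂ := (1 / 2 : ℂ) * ((scal : ℂ) - 8 * μ ^ 2)
  have hcasφ : A 0 (A 0 φ) + A 1 (A 1 φ) + A 2 (A 2 φ) = -K • φ := by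
    simpa using LinearMap.congr_fun hcas φ
  have hricci : (∑ i, A i ∘ₗ ∑ m, ((Ric i m : ℝ) : ℂ) • A m) φ = (c * -K) • φ := by
    rw [LinearMap.sum_comp_sum_smul_apply_eq_smul_sum A _ c φ fun k => sub_eq_zero.mp (hint k),
      Fin.sum_univ_three, hcasφ, smul_smul]
  have heig : qR φ = (μ ^ 2 * ((2 * (j : ℂ) + 3) * (2 * (j : ℂ) + 1))) • φ := by
    rw [hqR, LinearMap.add_apply, LinearMap.smul_apply, LinearMap.smul_apply, hricci,
      LinearMap.id_apply, smul_smul, ← add_smul]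
    congr 1
    ring
  have hreal : conj (c * -K) = c * -K :=
    (LinearMap.isSymmetric_sum_comp_sum_smul A hskew Ric hRicSymm).conj_eigenvalue_eq_self
      (Module.End.hasEigenvalue_of_hasEigenvector ⟨Module.End.mem_eigenspace_iff.mpr hricci, hφ⟩)
  have him : (c * -K).im = 4 * ((2 * j + 1) * (2 * j + 3)) * (μ ^ 2).im := by
    have hsplit : c * -K = ((-((2 * j + 1) * (2 * j + 3)) * scal / 2 : ℝ) : ℂ)
        + ((4 * ((2 * j + 1) * (2 * j + 3)) : ℝ) : ℂ) * μ ^ 2 := by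
      push_cast
      ring
    rw [hsplit, Complex.add_im, Complex.ofReal_im, Complex.im_ofReal_mul, zero_add]
  have hμ2 : (μ ^ 2).im = 0 := by
    rw [Complex.conj_eq_iff_im.mp hreal, eq_comm] at him
    exact (mul_eq_zero.mp him).resolve_left (by positivity)
  exact ⟨heig, hμ2, Complex.re_eq_zero_or_im_eq_zero_of_im_sq_eq_zero hμ2⟩
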